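/- Let G^(n)_{1,2} ∼ G(n;p,q) and let H(G^(n)_{1,2}) denote its Shannon entropy. Then H(G^(n)_{1,2}) = (d12/2) n log n + n ( H(Q) + Σ_{x∈Ξ12} s(p_x) ) + o(n), where d12 := Σ_{x∈Ξ12} p_x, Q ∼ q, and s(x) := x/2 − (x/2) log x for x > 0, s(0) := 0. -/

import Mathlib

open Filter Finset

open scoped Classical

noncomputable section

/-- Shannon entropy (natural logarithm) of a weight function on a finite type;
since `Real.log 0 = 0`, the usual convention `0 · log 0 = 0` holds. -/
def shannonEntropy {α : Type*} [Fintype α] (P : α → ℝ) : ℝ :=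
  - ∑ a, P a * Real.log (P a)

/-- `P` is a probability vector on the finite type `α`. -/
def IsProbVec {α : Type*} [Fintype α] (P : α → ℝ) : Prop :=
  (∀ a, 0 ≤ P a) ∧ ∑ a, P a = 1

/-- `s(x) = x/2 - (x/2)·log x`; since `Real.log 0 = 0`, `sFun 0 = 0`. -/
def sFun (x : ℝ) : ℝ := x / 2 - x / 2 * Real.log x

/-- A marked graph on the vertex set `Fin n` with edge marks `Ξ` and vertex marks `Θ`:
a symmetric, irreflexive `Option Ξ`-valued edge-mark function (`none` = no edge)
together with a vertex-mark function. -/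
abbrev MarkedGraph (n : ℕ) (Ξ Θ : Type) :=
  {fe : (Fin n → Fin n → Option Ξ) × (Fin n → Θ) //
    (∀ i j, fe.1 i j = fe.1 j i) ∧ ∀ i, fe.1 i i = none}

/-- The joint edge-mark set `Ξ₁₂ = ((Ξ₁∪{∘₁})×(Ξ₂∪{∘₂})) \ {(∘₁,∘₂)}`,
with `none` playing the role of `∘ᵢ`. -/
abbrev JointEdgeMark (Ξ1 Ξ2 : Type) := {x : Option Ξ1 × Option Ξ2 // x ≠ (none, none)}

instance (Ξ1 Ξ2 : Type) [Fintype Ξ1] [Fintype Ξ2] : Fintype (JointEdgeMark Ξ1 Ξ2) :=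
  Subtype.fintype _

instance (n : ℕ) (Ξ Θ : Type) [Fintype Ξ] [Fintype Θ] : Fintype (MarkedGraph n Ξ Θ) :=
  Subtype.fintype _

/-- A jointly marked graph. -/
abbrev JointMarkedGraph (n : ℕ) (Ξ1 Ξ2 Θ1 Θ2 : Type) :=
  MarkedGraph n (JointEdgeMark Ξ1 Ξ2) (Θ1 × Θ2)

/-- The first marginal of a jointly marked graph. -/
def marg1 {n : ℕ} {Ξ1 Ξ2 Θ1 Θ2 : Type} (G : JointMarkedGraph n Ξ1 Ξ2 Θ1 Θ2) :
    MarkedGraph n Ξ1 Θ1 :=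
  ⟨(fun i j => (G.1.1 i j).bind fun x => x.1.1, fun i => (G.1.2 i).1),
    fun i j => by dsimp only; rw [G.2.1 i j],
    fun i => by dsimp only; rw [G.2.2 i]; rfl⟩

/-- The second marginal of a jointly marked graph. -/
def marg2 {n : ℕ} {Ξ1 Ξ2 Θ1 Θ2 : Type} (G : JointMarkedGraph n Ξ1 Ξ2 Θ1 Θ2) :
    MarkedGraph n Ξ2 Θ2 :=
  ⟨(fun i j => (G.1.1 i j).bind fun x => x.1.2, fun i => (G.1.2 i).2),
    fun i j => by dsimp only; rw [G.2.1 i j],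
    fun i => by dsimp only; rw [G.2.2 i]; rfl⟩

/-- Combine two optional edge marks into an optional joint edge mark. -/
def jointOpt {Ξ1 Ξ2 : Type} (a : Option Ξ1) (b : Option Ξ2) : Option (JointEdgeMark Ξ1 Ξ2) :=
  if h : (a, b) = ((none : Option Ξ1), (none : Option Ξ2)) then none else some ⟨(a, b), h⟩

/-- The superposition `G₁ ⊕ G₂` of two marked graphs on the same vertex set. -/
def oplus {n : ℕ} {Ξ1 Ξ2 Θ1 Θ2 : Type} (H1 : MarkedGraph n Ξ1 Θ1) (H2 : MarkedGraph n Ξ2 Θ2) :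
    JointMarkedGraph n Ξ1 Ξ2 Θ1 Θ2 :=
  ⟨(fun i j => jointOpt (H1.1.1 i j) (H2.1.1 i j), fun i => (H1.1.2 i, H2.1.2 i)),
    fun i j => by dsimp only; rw [H1.2.1 i j, H2.2.1 i j],
    fun i => by dsimp only; rw [H1.2.2 i, H2.2.2 i]; simp [jointOpt]⟩

/-- `m_G(x)`: the number of edges of `G` carrying mark `x`. -/
def mCount {n : ℕ} {Ξ Θ : Type} (G : MarkedGraph n Ξ Θ) (x : Ξ) : ℕ :=
  (univ.filter (fun pr : Fin n × Fin n => pr.1 < pr.2 ∧ G.1.1 pr.1 pr.2 = some x)).card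

/-- `u_G(θ)`: the number of vertices of `G` carrying mark `θ`. -/
def uCount {n : ℕ} {Ξ Θ : Type} (G : MarkedGraph n Ξ Θ) (θ : Θ) : ℕ :=
  (univ.filter (fun i => G.1.2 i = θ)).card

/-- The degree of vertex `i` in `G`. -/
def degG {n : ℕ} {Ξ Θ : Type} (G : MarkedGraph n Ξ Θ) (i : Fin n) : ℕ :=
  (univ.filter (fun j => G.1.1 i j ≠ none)).card

/-- The total number of edges of `G`. -/
def edgeCount {n : ℕ} {Ξ Θ : Type} (G : MarkedGraph n Ξ Θ) : ℕ :=
  (univ.filter (fun pr : Fin n × Fin n => pr.1 < pr.2 ∧ G.1.1 pr.1 pr.2 ≠ none)).card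

/-- `c_k(d)`: the number of indices `i` with `d i = k`. -/
def ckCount (n : ℕ) (d : Fin n → ℕ) (k : ℕ) : ℕ := (univ.filter (fun i => d i = k)).card

/-- `c_{k,l}(d, d')`: the number of indices `i` with `d i = k` and `d' i = l`. -/
def cklCount (n : ℕ) (d d' : Fin n → ℕ) (k l : ℕ) : ℕ :=
  (univ.filter (fun i => d i = k ∧ d' i = l)).card

/-- The law of `f(A)` when `A` has law `P`. -/
def pushLaw {α β : Type*} [Fintype α] (P : α → ℝ) (f : α → β) (b : β) : ℝ :=
  ∑ a ∈ univ.filter (fun a => f a = b), P a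

/-- First-coordinate marginal of a weight function on joint edge marks;
`margE1 γ (some x₁)` sums over joint marks with first coordinate `x₁`, and
`margE1 γ none` over those with first coordinate `∘₁`. -/
def margE1 {Ξ1 Ξ2 : Type} [Fintype Ξ1] [Fintype Ξ2]
    (γ : JointEdgeMark Ξ1 Ξ2 → ℝ) (a : Option Ξ1) : ℝ :=
  ∑ x ∈ univ.filter (fun x : JointEdgeMark Ξ1 Ξ2 => x.1.1 = a), γ x

/-- Second-coordinate marginal of a weight function on joint edge marks. -/
def margE2 {Ξ1 Ξ2 : Type} [Fintype Ξ1] [Fintype Ξ2]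
    (γ : JointEdgeMark Ξ1 Ξ2 → ℝ) (b : Option Ξ2) : ℝ :=
  ∑ x ∈ univ.filter (fun x : JointEdgeMark Ξ1 Ξ2 => x.1.2 = b), γ x

/-- First marginal of a vertex-mark distribution. -/
def qMarg1 {Θ1 Θ2 : Type} [Fintype Θ2] (q : Θ1 × Θ2 → ℝ) (θ1 : Θ1) : ℝ := ∑ θ2, q (θ1, θ2)

/-- Second marginal of a vertex-mark distribution. -/
def qMarg2 {Θ1 Θ2 : Type} [Fintype Θ1] (q : Θ1 × Θ2 → ℝ) (θ2 : Θ2) : ℝ := ∑ θ1, q (θ1, θ2)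

/-- The probability that the marked Erdős–Rényi ensemble `G(n;p,q)` produces
exactly the jointly marked graph `H`. -/
def erProb {Ξ1 Ξ2 Θ1 Θ2 : Type} [Fintype Ξ1] [Fintype Ξ2] (n : ℕ)
    (pe : JointEdgeMark Ξ1 Ξ2 → ℝ) (q : Θ1 × Θ2 → ℝ)
    (H : JointMarkedGraph n Ξ1 Ξ2 Θ1 Θ2) : ℝ :=
  (∏ pr ∈ univ.filter (fun pr : Fin n × Fin n => pr.1 < pr.2),
      (H.1.1 pr.1 pr.2).elim (1 - (∑ x, pe x) / n) (fun x => pe x / n))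
    * ∏ i, q (H.1.2 i)

/-- The typical set `G^{(n)}_{p,q}` for the marked Erdős–Rényi ensemble. -/
def erTypical {Ξ1 Ξ2 Θ1 Θ2 : Type} [Fintype Ξ1] [Fintype Ξ2] [Fintype Θ1] [Fintype Θ2] (n : ℕ)
    (pe : JointEdgeMark Ξ1 Ξ2 → ℝ) (q : Θ1 × Θ2 → ℝ) :
    Finset (JointMarkedGraph n Ξ1 Ξ2 Θ1 Θ2) :=
  univ.filter (fun H =>
    (∑ x, |(mCount H x : ℝ) - n * pe x / 2|) ≤ (n : ℝ) ^ ((2 : ℝ) / 3) ∧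
    (∑ θ, |(uCount H θ : ℝ) - n * q θ|) ≤ (n : ℝ) ^ ((2 : ℝ) / 3))

/-- `d_{1,2}` for the Erdős–Rényi ensemble. -/
def erD12 {Ξ1 Ξ2 : Type} [Fintype Ξ1] [Fintype Ξ2] (pe : JointEdgeMark Ξ1 Ξ2 → ℝ) : ℝ :=
  ∑ x, pe x

/-- `d_1` for the Erdős–Rényi ensemble. -/
def erD1 {Ξ1 Ξ2 : Type} [Fintype Ξ1] [Fintype Ξ2] (pe : JointEdgeMark Ξ1 Ξ2 → ℝ) : ℝ :=
  ∑ a : Ξ1, margE1 pe (some a)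

/-- `d_2` for the Erdős–Rényi ensemble. -/
def erD2 {Ξ1 Ξ2 : Type} [Fintype Ξ1] [Fintype Ξ2] (pe : JointEdgeMark Ξ1 Ξ2 → ℝ) : ℝ :=
  ∑ b : Ξ2, margE2 pe (some b)

/-- `Σ₁₂ = H(Q) + Σ_x s(p_x)` for the Erdős–Rényi ensemble. -/
def erSigma12 {Ξ1 Ξ2 Θ1 Θ2 : Type} [Fintype Ξ1] [Fintype Ξ2] [Fintype Θ1] [Fintype Θ2]
    (pe : JointEdgeMark Ξ1 Ξ2 → ℝ) (q : Θ1 × Θ2 → ℝ) : ℝ :=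
  shannonEntropy q + ∑ x, sFun (pe x)

/-- `Σ₁ = H(Q₁) + Σ_{x₁∈Ξ₁} s(p_{x₁})` for the Erdős–Rényi ensemble. -/
def erSigma1 {Ξ1 Ξ2 Θ1 Θ2 : Type} [Fintype Ξ1] [Fintype Ξ2] [Fintype Θ1] [Fintype Θ2]
    (pe : JointEdgeMark Ξ1 Ξ2 → ℝ) (q : Θ1 × Θ2 → ℝ) : ℝ :=
  shannonEntropy (qMarg1 q) + ∑ a : Ξ1, sFun (margE1 pe (some a))

/-- `Σ₂ = H(Q₂) + Σ_{x₂∈Ξ₂} s(p_{x₂})` for the Erdős–Rényi ensemble. -/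
def erSigma2 {Ξ1 Ξ2 Θ1 Θ2 : Type} [Fintype Ξ1] [Fintype Ξ2] [Fintype Θ1] [Fintype Θ2]
    (pe : JointEdgeMark Ξ1 Ξ2 → ℝ) (q : Θ1 × Θ2 → ℝ) : ℝ :=
  shannonEntropy (qMarg2 q) + ∑ b : Ξ2, sFun (margE2 pe (some b))

/-- The probability of a decoding error for the code `(f1, f2, g)` when the source
has law `P`. -/
def errProb {n L1 L2 : ℕ} {Ξ1 Ξ2 Θ1 Θ2 : Type}
    [Fintype Ξ1] [Fintype Ξ2] [Fintype Θ1] [Fintype Θ2]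
    (P : JointMarkedGraph n Ξ1 Ξ2 Θ1 Θ2 → ℝ)
    (f1 : MarkedGraph n Ξ1 Θ1 → Fin L1) (f2 : MarkedGraph n Ξ2 Θ2 → Fin L2)
    (g : Fin L1 × Fin L2 → JointMarkedGraph n Ξ1 Ξ2 Θ1 Θ2) : ℝ :=
  ∑ H ∈ univ.filter (fun H => g (f1 (marg1 H), f2 (marg2 H)) ≠ H), P H

/-- A rate tuple `(α1, R1, α2, R2)` is achievable for the family of source laws `P`. -/
def achievable {Ξ1 Ξ2 Θ1 Θ2 : Type} [Fintype Ξ1] [Fintype Ξ2] [Fintype Θ1] [Fintype Θ2]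
    (P : ∀ n : ℕ, JointMarkedGraph n Ξ1 Ξ2 Θ1 Θ2 → ℝ) (α1 R1 α2 R2 : ℝ) : Prop :=
  ∃ (L1 L2 : ℕ → ℕ) (f1 : ∀ n, MarkedGraph n Ξ1 Θ1 → Fin (L1 n))
    (f2 : ∀ n, MarkedGraph n Ξ2 Θ2 → Fin (L2 n))
    (g : ∀ n, Fin (L1 n) × Fin (L2 n) → JointMarkedGraph n Ξ1 Ξ2 Θ1 Θ2),
    limsup (fun n : ℕ => (Real.log (L1 n) - (α1 * n * Real.log n + R1 * n)) / n) atTop ≤ 0 ∧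
    limsup (fun n : ℕ => (Real.log (L2 n) - (α2 * n * Real.log n + R2 * n)) / n) atTop ≤ 0 ∧
    Tendsto (fun n => errProb (P n) (f1 n) (f2 n) (g n)) atTop (nhds 0)

/-- Membership in the rate region for the family of source laws `P`. -/
def inRateRegion {Ξ1 Ξ2 Θ1 Θ2 : Type} [Fintype Ξ1] [Fintype Ξ2] [Fintype Θ1] [Fintype Θ2]
    (P : ∀ n : ℕ, JointMarkedGraph n Ξ1 Ξ2 Θ1 Θ2 → ℝ) (α1 R1 α2 R2 : ℝ) : Prop :=
  ∃ R1s R2s : ℕ → ℝ,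
    Tendsto R1s atTop (nhds R1) ∧ Tendsto R2s atTop (nhds R2) ∧
    ∀ m, achievable P α1 (R1s m) α2 (R2s m)

/-- `(α,R) ⪰ (α',R')` iff `α > α'`, or `α = α'` and `R ≥ R'`. -/
def succeq (a b : ℝ × ℝ) : Prop := b.1 < a.1 ∨ (a.1 = b.1 ∧ b.2 ≤ a.2)

/-- The set of simple unmarked graphs on `[n]` with maximum degree `≤ Δ` whose degree
counts agree with those of the degree sequence `dseq`. -/
def cmSet (n Δ : ℕ) (dseq : Fin n → ℕ) : Finset (MarkedGraph n Unit Unit) :=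
  univ.filter (fun G =>
    (∀ i, degG G i ≤ Δ) ∧ ∀ k ≤ Δ, ckCount n (degG G) k = ckCount n dseq k)

/-- Forget all marks of a marked graph. -/
def forget {n : ℕ} {Ξ Θ : Type} (G : MarkedGraph n Ξ Θ) : MarkedGraph n Unit Unit :=
  ⟨(fun i j => (G.1.1 i j).map (fun _ => ()), fun _ => ()),
    fun i j => by dsimp only; rw [G.2.1 i j],
    fun i => by dsimp only; rw [G.2.2 i]; rfl⟩

/-- The probability that the marked configuration-model ensemble `G(n; d⁽ⁿ⁾, γ, q)`
produces exactly the jointly marked graph `H`. -/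
def cmProb {Ξ1 Ξ2 Θ1 Θ2 : Type} [Fintype Ξ1] [Fintype Ξ2] (n Δ : ℕ) (dseq : Fin n → ℕ)
    (γ : JointEdgeMark Ξ1 Ξ2 → ℝ) (q : Θ1 × Θ2 → ℝ)
    (H : JointMarkedGraph n Ξ1 Ξ2 Θ1 Θ2) : ℝ :=
  (if forget H ∈ cmSet n Δ dseq then ((cmSet n Δ dseq).card : ℝ)⁻¹ else 0) *
    (∏ pr ∈ univ.filter (fun pr : Fin n × Fin n => pr.1 < pr.2),
      (H.1.1 pr.1 pr.2).elim 1 (fun x => γ x)) *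
    ∏ i, q (H.1.2 i)

/-- `β₁ = P(Γ₁ ≠ ∘₁)`. -/
def beta1 {Ξ1 Ξ2 : Type} [Fintype Ξ1] [Fintype Ξ2] (γ : JointEdgeMark Ξ1 Ξ2 → ℝ) : ℝ :=
  ∑ x ∈ univ.filter (fun x : JointEdgeMark Ξ1 Ξ2 => x.1.1 ≠ none), γ x

/-- `β₂ = P(Γ₂ ≠ ∘₂)`. -/
def beta2 {Ξ1 Ξ2 : Type} [Fintype Ξ1] [Fintype Ξ2] (γ : JointEdgeMark Ξ1 Ξ2 → ℝ) : ℝ :=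
  ∑ x ∈ univ.filter (fun x : JointEdgeMark Ξ1 Ξ2 => x.1.2 ≠ none), γ x

/-- The joint law `P(X = k, Xᵢ = l)` where `X ∼ r` and `Xᵢ` is a `β`-thinning of `X`. -/
def pXX (r : ℕ → ℝ) (β : ℝ) (k l : ℕ) : ℝ :=
  r k * (k.choose l : ℝ) * β ^ l * (1 - β) ^ (k - l)

/-- The law of the `β`-thinning `Xᵢ` of `X ∼ r` (supported on `{0,…,Δ}`). -/
def pXlaw (Δ : ℕ) (r : ℕ → ℝ) (β : ℝ) (l : ℕ) : ℝ := ∑ k ∈ Finset.range (Δ + 1), pXX r β k l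

/-- The mean of a law supported on `{0,…,Δ}`. -/
def meanR (Δ : ℕ) (r : ℕ → ℝ) : ℝ := ∑ k ∈ Finset.range (Δ + 1), k * r k

/-- The Shannon entropy of a law supported on `{0,…,Δ}`. -/
def entR (Δ : ℕ) (r : ℕ → ℝ) : ℝ := - ∑ k ∈ Finset.range (Δ + 1), r k * Real.log (r k)

/-- `E[log X!]` for `X` with law `r` supported on `{0,…,Δ}`. -/
def elogFact (Δ : ℕ) (r : ℕ → ℝ) : ℝ := ∑ k ∈ Finset.range (Δ + 1), r k * Real.log (Nat.factorial k)

/-- `Σ₁₂ = -s(d₁₂) + H(X) - E[log X!] + H(Q) + (d₁₂/2)·H(Γ)` for the configuration model. -/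
def cmSigma12 {Ξ1 Ξ2 Θ1 Θ2 : Type} [Fintype Ξ1] [Fintype Ξ2] [Fintype Θ1] [Fintype Θ2]
    (Δ : ℕ) (r : ℕ → ℝ) (γ : JointEdgeMark Ξ1 Ξ2 → ℝ) (q : Θ1 × Θ2 → ℝ) : ℝ :=
  -sFun (meanR Δ r) + entR Δ r - elogFact Δ r + shannonEntropy q
    + meanR Δ r / 2 * shannonEntropy γ

/-- `Σ₁ = -s(d₁) + H(X₁) - E[log X₁!] + H(Q₁) + (d₁/2)·H(Γ₁ | Γ₁ ≠ ∘₁)`. -/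
def cmSigma1 {Ξ1 Ξ2 Θ1 Θ2 : Type} [Fintype Ξ1] [Fintype Ξ2] [Fintype Θ1] [Fintype Θ2]
    (Δ : ℕ) (r : ℕ → ℝ) (γ : JointEdgeMark Ξ1 Ξ2 → ℝ) (q : Θ1 × Θ2 → ℝ) : ℝ :=
  -sFun (meanR Δ (pXlaw Δ r (beta1 γ))) + entR Δ (pXlaw Δ r (beta1 γ))
    - elogFact Δ (pXlaw Δ r (beta1 γ)) + shannonEntropy (qMarg1 q)
    + meanR Δ (pXlaw Δ r (beta1 γ)) / 2
        * shannonEntropy (fun a : Ξ1 => margE1 γ (some a) / beta1 γ)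

/-- `Σ₂ = -s(d₂) + H(X₂) - E[log X₂!] + H(Q₂) + (d₂/2)·H(Γ₂ | Γ₂ ≠ ∘₂)`. -/
def cmSigma2 {Ξ1 Ξ2 Θ1 Θ2 : Type} [Fintype Ξ1] [Fintype Ξ2] [Fintype Θ1] [Fintype Θ2]
    (Δ : ℕ) (r : ℕ → ℝ) (γ : JointEdgeMark Ξ1 Ξ2 → ℝ) (q : Θ1 × Θ2 → ℝ) : ℝ :=
  -sFun (meanR Δ (pXlaw Δ r (beta2 γ))) + entR Δ (pXlaw Δ r (beta2 γ))
    - elogFact Δ (pXlaw Δ r (beta2 γ)) + shannonEntropy (qMarg2 q)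
    + meanR Δ (pXlaw Δ r (beta2 γ)) / 2
        * shannonEntropy (fun b : Ξ2 => margE2 γ (some b) / beta2 γ)

/-- The typical set `W^{(n)}` for the configuration model. -/
def Wset {Ξ1 Ξ2 Θ1 Θ2 : Type} [Fintype Ξ1] [Fintype Ξ2] [Fintype Θ1] [Fintype Θ2]
    (n Δ : ℕ) (dseq : Fin n → ℕ) (r : ℕ → ℝ)
    (γ : JointEdgeMark Ξ1 Ξ2 → ℝ) (q : Θ1 × Θ2 → ℝ) :
    Finset (JointMarkedGraph n Ξ1 Ξ2 Θ1 Θ2) :=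
  univ.filter (fun H =>
    (∀ k ≤ Δ, ckCount n (degG H) k = ckCount n dseq k) ∧
    ((∑ x, (mCount H x : ℝ)) = (∑ i, (dseq i : ℝ)) / 2) ∧
    ((∑ x, |(mCount H x : ℝ) - (∑ i, (dseq i : ℝ)) / 2 * γ x|) ≤ (n : ℝ) ^ ((2 : ℝ) / 3)) ∧
    ((∑ θ, |(uCount H θ : ℝ) - n * q θ|) ≤ (n : ℝ) ^ ((2 : ℝ) / 3)) ∧
    (∀ k ≤ Δ, ∀ l ≤ k,
      |(cklCount n (degG H) (degG (marg1 H)) k l : ℝ) - n * pXX r (beta1 γ) k l|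
        ≤ (n : ℝ) ^ ((2 : ℝ) / 3)) ∧
    (∀ k ≤ Δ, ∀ l ≤ k,
      |(cklCount n (degG H) (degG (marg2 H)) k l : ℝ) - n * pXX r (beta2 γ) k l|
        ≤ (n : ℝ) ^ ((2 : ℝ) / 3)))

/-- The law of the graph obtained from a uniformly random graph in `cmSet n Δ dseq`
by keeping every edge independently with probability `β`. -/
def percLaw (n Δ : ℕ) (dseq : Fin n → ℕ) (β : ℝ) (G1 : MarkedGraph n Unit Unit) : ℝ :=
  ∑ G ∈ cmSet n Δ dseq,
    ((cmSet n Δ dseq).card : ℝ)⁻¹ *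
      (if ∀ i j, G1.1.1 i j ≠ none → G.1.1 i j ≠ none then
        β ^ edgeCount G1 * (1 - β) ^ (edgeCount G - edgeCount G1) else 0)


/-! The edge slots and vertex marks of `G(n;p,q)` are independent, so its entropy is exactly
`C(n,2)·H(F_n) + n·H(Q)`, where `F_n` is the law of one edge slot: empty with probability
`1 - d₁₂/n`, mark `x` with probability `p_x/n`. Since `-x log x` turns products into sums,
`H(F_n) = -(1 - d₁₂/n) log (1 - d₁₂/n) + (d₁₂ log n - Σ_x p_x log p_x)/n`, and
`n log (1 - d₁₂/n) → -d₁₂`; multiplying by `C(n,2) = n(n-1)/2` gives the expansion. -/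

open Real

lemma shannonEntropy_eq_sum_negMulLog {α : Type*} [Fintype α] (P : α → ℝ) :
    shannonEntropy P = ∑ a, negMulLog (P a) := by
  simp only [shannonEntropy, negMulLog, ← Finset.sum_neg_distrib, neg_mul]

lemma shannonEntropy_comp_equiv {α β : Type*} [Fintype α] [Fintype β] (e : α ≃ β)
    (P : β → ℝ) : shannonEntropy (P ∘ e) = shannonEntropy P := by
  simp only [shannonEntropy_eq_sum_negMulLog, Function.comp_apply]
  exact e.sum_comp fun b => negMulLog (P b)

lemma shannonEntropy_prod {α β : Type*} [Fintype α] [Fintype β] {P : α → ℝ}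
    {Q : β → ℝ} (hP : ∑ a, P a = 1) (hQ : ∑ b, Q b = 1) :
    shannonEntropy (fun ab : α × β => P ab.1 * Q ab.2)
      = shannonEntropy P + shannonEntropy Q := by
  simp only [shannonEntropy_eq_sum_negMulLog, Fintype.sum_prod_type, negMulLog_mul,
    Finset.sum_add_distrib, ← Finset.mul_sum, ← Finset.sum_mul, hP, hQ, one_mul]

lemma sum_pi_prod_mul_apply {ι : Type*} [Fintype ι] [DecidableEq ι] {α : ι → Type*}
    [∀ i, Fintype (α i)] {f : ∀ i, α i → ℝ} (hf : ∀ i, ∑ a, f i a = 1) (i : ι)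
    (φ : α i → ℝ) :
    ∑ g : ∀ j, α j, (∏ j, f j (g j)) * φ (g i) = ∑ a, f i a * φ a := by
  set F := Function.update f i (fun a => f i a * φ a)
  have hF : ∀ j ∈ ({i}ᶜ : Finset ι), F j = f j := fun j hj =>
    Function.update_of_ne (by simpa using hj) _ _
  have hprod : ∀ g : ∀ j, α j, (∏ j, f j (g j)) * φ (g i) = ∏ j, F j (g j) := fun g => by
    rw [Fintype.prod_eq_mul_prod_compl i, Fintype.prod_eq_mul_prod_compl i,
      Finset.prod_congr rfl fun j hj => congrFun (hF j hj) (g j)]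
    simp only [F, Function.update_self]
    ring
  simp only [hprod, ← Fintype.prod_sum]
  rw [Fintype.prod_eq_mul_prod_compl i, Finset.prod_congr rfl fun j hj => by rw [hF j hj, hf j]]
  simp [F]

lemma shannonEntropy_pi {ι : Type*} [Fintype ι] [DecidableEq ι] {α : ι → Type*}
    [∀ i, Fintype (α i)] {f : ∀ i, α i → ℝ} (hf : ∀ i, ∑ a, f i a = 1) :
    shannonEntropy (fun g : ∀ i, α i => ∏ i, f i (g i)) = ∑ i, shannonEntropy (f i) := by
  have hlog : ∀ g : ∀ i, α i, (∏ i, f i (g i)) * log (∏ i, f i (g i))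
      = ∑ i, (∏ j, f j (g j)) * log (f i (g i)) := fun g => by
    by_cases h : ∃ i, f i (g i) = 0
    · obtain ⟨i, hi⟩ := h
      simp [Finset.prod_eq_zero (f := fun j => f j (g j)) (mem_univ i) hi]
    · push Not at h
      rw [log_prod fun i _ => h i, Finset.mul_sum]
  simp only [shannonEntropy, hlog]
  rw [Finset.sum_comm, ← Finset.sum_neg_distrib]
  exact Finset.sum_congr rfl fun i _ =>
    congrArg Neg.neg (sum_pi_prod_mul_apply hf i fun a => log (f i a))

lemma sum_prod_pi_const {ι α : Type*} [Fintype ι] [DecidableEq ι] [Fintype α]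
    {P : α → ℝ} (hP : ∑ a, P a = 1) : ∑ g : ι → α, ∏ i, P (g i) = 1 := by
  rw [← Fintype.prod_sum fun _ => P, hP, Finset.prod_const_one]

lemma shannonEntropy_prod_pi_const {ι α : Type*} [Fintype ι] [DecidableEq ι] [Fintype α]
    {P : α → ℝ} (hP : ∑ a, P a = 1) :
    shannonEntropy (fun g : ι → α => ∏ i, P (g i)) = Fintype.card ι * shannonEntropy P := by
  rw [shannonEntropy_pi (f := fun _ => P) fun _ => hP, Finset.sum_const, nsmul_eq_mul,
    Finset.card_univ]

def markedGraphEquiv (n : ℕ) (Ξ Θ : Type) :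
    MarkedGraph n Ξ Θ ≃
      (({pr : Fin n × Fin n // pr.1 < pr.2} → Option Ξ) × (Fin n → Θ)) where
  toFun G := (fun pr => G.1.1 pr.1.1 pr.1.2, G.1.2)
  invFun fv :=
    ⟨(fun i j => if h : i < j then fv.1 ⟨(i, j), h⟩ else
        if h' : j < i then fv.1 ⟨(j, i), h'⟩ else none, fv.2), by
      intro i j
      rcases lt_trichotomy i j with h | rfl | h
      · simp [h, h.not_gt]
      · rfl
      · simp [h, h.not_gt], fun i => by simp⟩
  left_inv G := by
    refine Subtype.ext (Prod.ext (funext₂ fun i j => ?_) rfl)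
    rcases lt_trichotomy i j with h | rfl | h
    · simp [h]
    · simpa using (G.2.2 i).symm
    · simp [h, h.not_gt, G.2.1 i j]
  right_inv fv := Prod.ext (funext fun pr => by simp [pr.2]) rfl

def edgeSlotLaw {α : Type*} [Fintype α] (w : α → ℝ) (t : ℝ) (o : Option α) : ℝ :=
  o.elim (1 - (∑ a, w a) / t) fun a => w a / t

lemma sum_edgeSlotLaw {α : Type*} [Fintype α] (w : α → ℝ) (t : ℝ) :
    ∑ o, edgeSlotLaw w t o = 1 := by
  simp [edgeSlotLaw, Fintype.sum_option, ← Finset.sum_div]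

lemma shannonEntropy_edgeSlotLaw {α : Type*} [Fintype α] (w : α → ℝ) {t : ℝ}
    (ht : t ≠ 0) :
    shannonEntropy (edgeSlotLaw w t) = negMulLog (1 - (∑ a, w a) / t)
      + ((∑ a, w a) * log t + ∑ a, negMulLog (w a)) / t := by
  have hslot : ∀ a, negMulLog (w a / t) = (w a * log t + negMulLog (w a)) / t := fun a => by
    rw [div_eq_mul_inv, negMulLog_mul]
    simp only [negMulLog, log_inv]
    field_simp
    ring
  simp only [shannonEntropy_eq_sum_negMulLog, Fintype.sum_option, edgeSlotLaw, Option.elim,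
    hslot, ← Finset.sum_div, Finset.sum_add_distrib, ← Finset.sum_mul]

lemma sFun_eq_half_add_negMulLog (x : ℝ) : sFun x = x / 2 + negMulLog x / 2 := by
  rw [sFun, negMulLog]
  ring

lemma tendsto_shannonEntropy_edgeSlotLaw {α : Type*} [Fintype α] (w : α → ℝ) :
    Tendsto (fun n : ℕ => ((n : ℝ) - 1) / 2 * shannonEntropy (edgeSlotLaw w n)
        - (∑ a, w a) / 2 * log n) atTop (nhds (∑ a, sFun (w a))) := by
  set d := ∑ a, w a
  set S := ∑ a, negMulLog (w a)
  have hn : Tendsto (fun n : ℕ => (n : ℝ)) atTop atTop := tendsto_natCast_atTop_atTop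
  have hinv : Tendsto (fun n : ℕ => (n : ℝ)⁻¹) atTop (nhds 0) :=
    tendsto_inv_atTop_zero.comp hn
  have hmullog : Tendsto (fun n : ℕ => (n : ℝ) * log (1 - d / n)) atTop (nhds (-d)) := by
    simpa [Function.comp_def, neg_div, ← sub_eq_add_neg] using
      (tendsto_mul_log_one_add_div_atTop (-d)).comp hn
  have hlog : Tendsto (fun n : ℕ => log n / n) atTop (nhds 0) :=
    (isLittleO_log_id_atTop.tendsto_div_nhds_zero).comp hn
  have hlim : Tendsto (fun n : ℕ => -((1 - (n : ℝ)⁻¹) * (1 - d * (n : ℝ)⁻¹) / 2)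
        * ((n : ℝ) * log (1 - d / n)) + (1 - (n : ℝ)⁻¹) / 2 * S - d / 2 * (log n / n))
      atTop (nhds (d / 2 + S / 2)) := by
    convert (((((tendsto_const_nhds.sub hinv).mul
      (tendsto_const_nhds.sub (hinv.const_mul d))).div_const 2).neg.mul hmullog).add
      (((tendsto_const_nhds.sub hinv).div_const 2).mul_const S)).sub (hlog.const_mul _) using 2
    ring
  simp only [sFun_eq_half_add_negMulLog, Finset.sum_add_distrib, ← Finset.sum_div]
  refine hlim.congr' ((eventually_ne_atTop 0).mono fun n hn0 => ?_)
  have hn0' : (n : ℝ) ≠ 0 := Nat.cast_ne_zero.2 hn0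
  dsimp only
  rw [shannonEntropy_edgeSlotLaw w hn0', negMulLog]
  field_simp
  ring

lemma erProb_eq_comp_markedGraphEquiv {Ξ1 Ξ2 Θ1 Θ2 : Type} [Fintype Ξ1] [Fintype Ξ2]
    (n : ℕ) (pe : JointEdgeMark Ξ1 Ξ2 → ℝ) (q : Θ1 × Θ2 → ℝ) :
    erProb n pe q = (fun fv => (∏ pr, edgeSlotLaw pe n (fv.1 pr)) * ∏ i, q (fv.2 i))
      ∘ markedGraphEquiv n (JointEdgeMark Ξ1 Ξ2) (Θ1 × Θ2) := by
  funext H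
  exact congrArg (· * _) (Finset.prod_subtype _ (fun _ => by simp) _)

lemma shannonEntropy_erProb {Ξ1 Ξ2 Θ1 Θ2 : Type}
    [Fintype Ξ1] [Fintype Ξ2] [Fintype Θ1] [Fintype Θ2]
    (n : ℕ) (pe : JointEdgeMark Ξ1 Ξ2 → ℝ) {q : Θ1 × Θ2 → ℝ}
    (hq : ∑ θ, q θ = 1) :
    shannonEntropy (erProb n pe q)
      = n.choose 2 * shannonEntropy (edgeSlotLaw pe n) + n * shannonEntropy q := by
  have hpairs : Fintype.card {pr : Fin n × Fin n // pr.1 < pr.2} = n.choose 2 := by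
    rw [Fintype.card_subtype, Fintype.card_product_filter_lt, Fintype.card_fin]
  rw [erProb_eq_comp_markedGraphEquiv, shannonEntropy_comp_equiv,
    shannonEntropy_prod (sum_prod_pi_const (sum_edgeSlotLaw pe n)) (sum_prod_pi_const hq),
    shannonEntropy_prod_pi_const (sum_edgeSlotLaw pe n), shannonEntropy_prod_pi_const hq,
    hpairs, Fintype.card_fin]

theorem er_entropy_asymptotics_general {Ξ1 Ξ2 Θ1 Θ2 : Type}
    [Fintype Ξ1] [Fintype Ξ2] [Fintype Θ1] [Fintype Θ2]
    (pe : JointEdgeMark Ξ1 Ξ2 → ℝ)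
    (q : Θ1 × Θ2 → ℝ) (hq : IsProbVec q) :
    Tendsto (fun n : ℕ =>
        (shannonEntropy (erProb (Θ1 := Θ1) (Θ2 := Θ2) n pe q)
          - erD12 pe / 2 * n * Real.log n - n * erSigma12 pe q) / n)
      atTop (nhds 0) := by
  have hlim := (tendsto_shannonEntropy_edgeSlotLaw pe).sub_const (∑ x, sFun (pe x))
  rw [sub_self] at hlim
  refine hlim.congr' ((eventually_ne_atTop 0).mono fun n hn => ?_)
  have hn' : (n : ℝ) ≠ 0 := Nat.cast_ne_zero.2 hn
  dsimp only
  rw [shannonEntropy_erProb n pe hq.2, Nat.cast_choose_two, erSigma12, erD12]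
  field_simp
  ring

/-- asymptotics of the Shannon entropy of the marked
Erdős–Rényi ensemble. -/
theorem er_entropy_asymptotics {Ξ1 Ξ2 Θ1 Θ2 : Type}
    [Fintype Ξ1] [Fintype Ξ2] [Fintype Θ1] [Fintype Θ2]
    (pe : JointEdgeMark Ξ1 Ξ2 → ℝ) (hpe : ∀ x, 0 ≤ pe x) (hpos : 0 < erD12 pe)
    (q : Θ1 × Θ2 → ℝ) (hq : IsProbVec q) :
    Tendsto (fun n : ℕ =>
        (shannonEntropy (erProb (Θ1 := Θ1) (Θ2 := Θ2) n pe q)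
          - erD12 pe / 2 * n * Real.log n - n * erSigma12 pe q) / n)
      atTop (nhds 0) :=
  er_entropy_asymptotics_general pe q hq

end
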